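/- Let E be a Heyting category, D a cartesian closed full subcategory of E, and L : E → D a finite-limit-preserving left adjoint to the inclusion of D into E such that the unit η : L → 1 is a natural monomorphism. Then E is cartesian closed. -/

import Mathlib

open CategoryTheory CategoryTheory.Limits

universe w v u v₁ u₁ v₂ u₂ v₃ u₃

namespace RRC

variable {E : Type u} [Category.{v} E]

/-- A cover is a regular epimorphism. -/
def IsCover {X Y : E} (f : X ⟶ Y) : Prop := Nonempty (RegularEpi f)

/-- A regular category: finite limits, pullback-stable regular-epi/mono image
factorizations. -/
class RegularCat (E : Type u) [Category.{v} E] : Prop where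
  hasFiniteLimits : HasFiniteLimits E
  hasImages : HasImages E
  coverFactorThruImage : ∀ {X Y : E} (f : X ⟶ Y),
    (haveI := hasImages; haveI := hasFiniteLimits; IsCover (factorThruImage f))
  coverStable : ∀ {P X Y Z : E} (fst : P ⟶ X) (snd : P ⟶ Y) (f : X ⟶ Z) (g : Y ⟶ Z),
    IsPullback fst snd f g → IsCover g → IsCover fst

attribute [instance] RegularCat.hasFiniteLimits RegularCat.hasImages

/-- A Heyting-algebra structure on a partial order (with all data pinned to the
given order). -/
structure HeytingOn (α : Type w) [PartialOrder α] where
  sup : α → α → α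
  inf : α → α → α
  himp : α → α → α
  bot : α
  top : α
  le_top : ∀ a, a ≤ top
  bot_le : ∀ a, bot ≤ a
  inf_le_left : ∀ a b, inf a b ≤ a
  inf_le_right : ∀ a b, inf a b ≤ b
  le_inf : ∀ a b c, a ≤ b → a ≤ c → a ≤ inf b c
  le_sup_left : ∀ a b, a ≤ sup a b
  le_sup_right : ∀ a b, b ≤ sup a b
  sup_le : ∀ a b c, a ≤ c → b ≤ c → sup a b ≤ c
  le_himp_iff : ∀ a b c, a ≤ himp b c ↔ inf a b ≤ c

/-- Both adjoints `∃_f ⊣ f⁻¹ ⊣ ∀_f` to the pullback map on subobject lattices. -/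
structure SubAdjoints {X Y : E} (f : X ⟶ Y) : Type (max u v) where
  pb : Subobject Y → Subobject X
  pb_spec : ∀ (S : Subobject Y) {Γ : E} (g : Γ ⟶ X), (pb S).Factors g ↔ S.Factors (g ≫ f)
  ex : Subobject X → Subobject Y
  all : Subobject X → Subobject Y
  gc_ex : ∀ (S : Subobject X) (T : Subobject Y), ex S ≤ T ↔ S ≤ pb T
  gc_all : ∀ (T : Subobject Y) (S : Subobject X), pb T ≤ S ↔ T ≤ all S

/-- A Heyting category: a regular category where each subobject lattice is a
Heyting algebra and each pullback map on subobjects has both adjoints. -/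
class HeytingCat (E : Type u) [Category.{v} E] : Prop where
  toRegularCat : RegularCat E
  heyting : ∀ X : E, Nonempty (HeytingOn (Subobject X))
  adjoints : ∀ {X Y : E} (f : X ⟶ Y), Nonempty (SubAdjoints f)

attribute [instance] HeytingCat.toRegularCat

/-- A regular functor: preserves finite limits and covers (regular epis). -/
structure IsRegularFunctor {C : Type u₁} [Category.{v₁} C] {D : Type u₂} [Category.{v₂} D]
    (F : C ⥤ D) : Prop where
  preservesFiniteLimits : PreservesFiniteLimits F
  preservesCovers : ∀ {X Y : C} (f : X ⟶ Y), IsCover f → IsCover (F.map f)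

/-- The image of a subobject under a functor (defaults to `⊤` if the functor fails
to preserve the monomorphism). -/
noncomputable def mapSub {C : Type u₁} [Category.{v₁} C] {D : Type u₂} [Category.{v₂} D]
    (F : C ⥤ D) {X : C} (S : Subobject X) : Subobject (F.obj X) :=
  haveI := Classical.propDecidable (Mono (F.map S.arrow))
  if h : Mono (F.map S.arrow) then @Subobject.mk _ _ _ _ (F.map S.arrow) h else ⊤

section OPAS

variable (E) [HasFiniteLimits E]

/-- An ordered partial applicative structure internal to `E`: a partial order `le`
and a monotone partial binary application with downward closed domain, all
expressed via generalized elements. -/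
structure OPAS where
  A : E
  le : Subobject (A ⨯ A)
  le_refl : ∀ {Γ : E} (x : Γ ⟶ A), le.Factors (prod.lift x x)
  le_antisymm : ∀ {Γ : E} (x y : Γ ⟶ A),
    le.Factors (prod.lift x y) → le.Factors (prod.lift y x) → x = y
  le_trans : ∀ {Γ : E} (x y z : Γ ⟶ A),
    le.Factors (prod.lift x y) → le.Factors (prod.lift y z) → le.Factors (prod.lift x z)
  dom : Subobject (A ⨯ A)
  app : (dom : E) ⟶ A
  dom_down : ∀ {Γ : E} (a b c d : Γ ⟶ A),
    le.Factors (prod.lift a b) → le.Factors (prod.lift c d) →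
    dom.Factors (prod.lift b d) → dom.Factors (prod.lift a c)
  app_mono : ∀ {Γ : E} (a b c d : Γ ⟶ A) (hab : le.Factors (prod.lift a b))
    (hcd : le.Factors (prod.lift c d)) (h : dom.Factors (prod.lift b d)),
    le.Factors (prod.lift (dom.factorThru (prod.lift a c) (dom_down a b c d hab hcd h) ≫ app)
      (dom.factorThru (prod.lift b d) h ≫ app))

end OPAS

variable [HasFiniteLimits E]

/-- `x ≤ y` for generalized elements of an OPAS. -/
def OPAS.Le (S : OPAS E) {Γ : E} (x y : Γ ⟶ S.A) : Prop := S.le.Factors (prod.lift x y)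

/-- `x · y ↓ z` for generalized elements of an OPAS. -/
def OPAS.App (S : OPAS E) {Γ : E} (x y z : Γ ⟶ S.A) : Prop :=
  ∃ h : S.dom.Factors (prod.lift x y), S.dom.factorThru (prod.lift x y) h ≫ S.app = z

/-- Applicative terms in `n` variables (built from projections/variables by
pointwise application); these present the partial combinatory arrows `Aⁿ ⇀ A`. -/
inductive PTerm : ℕ → Type where
  | var {n : ℕ} : Fin n → PTerm n
  | app {n : ℕ} : PTerm n → PTerm n → PTerm n

/-- Weakening of an applicative term. -/
def PTerm.weaken : {n : ℕ} → PTerm n → PTerm (n + 1)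
  | _, .var i => .var i.castSucc
  | _, .app s t => .app s.weaken t.weaken

/-- The term `x₀ x₁ ⋯ xₙ` (iterated application of the extra first variable). -/
def iterTerm : (n : ℕ) → PTerm (n + 1)
  | 0 => .var 0
  | n + 1 => .app (iterTerm n).weaken (.var (Fin.last (n + 1)))

/-- Evaluation (Kleene equality style) of an applicative term on generalized
elements of an OPAS. -/
def OPAS.Eval (S : OPAS E) {Γ : E} : {n : ℕ} → PTerm n → (Fin n → (Γ ⟶ S.A)) → (Γ ⟶ S.A) → Prop
  | _, .var i, x, z => z = x i
  | _, .app s t, x, z => ∃ u v, S.Eval s x u ∧ S.Eval t x v ∧ S.App u v z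

/-- `r` represents the partial combinatory arrow `t` (at its stage of definition):
at every later stage, whenever `t` is defined on a tuple `x` with value `v`, the
iterated application `r x₁ ⋯ xₙ` is defined with value `≤ v`. -/
def OPAS.RepresentsAt (S : OPAS E) {n : ℕ} (t : PTerm n) {Γ : E} (r : Γ ⟶ S.A) : Prop :=
  ∀ (Δ : E) (g : Δ ⟶ Γ) (x : Fin n → (Δ ⟶ S.A)) (v : Δ ⟶ S.A),
    S.Eval t x v → ∃ y : Δ ⟶ S.A, S.Le y v ∧ S.Eval (iterTerm n) (Fin.cons (g ≫ r) x) y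

/-- A subobject is inhabited when its support is the whole terminal object. -/
def Inhab {X : E} (U : Subobject X) : Prop :=
  ∃ (Γ : E) (e : Γ ⟶ ⊤_ E) (a : Γ ⟶ X), IsCover e ∧ U.Factors a

/-- Two subobjects intersect when their intersection is inhabited. -/
def Intersects {X : E} (U V : Subobject X) : Prop :=
  ∃ (Γ : E) (e : Γ ⟶ ⊤_ E) (a : Γ ⟶ X), IsCover e ∧ U.Factors a ∧ V.Factors a

/-- An ordered partial combinatory algebra: an OPAS in which every partial
combinatory arrow is representable (the object of realizers is inhabited). -/
structure OPCA (E : Type u) [Category.{v} E] [HasFiniteLimits E] extends OPAS E where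
  complete : ∀ {n : ℕ} (t : PTerm n), ∃ (Γ : E) (e : Γ ⟶ ⊤_ E) (r : Γ ⟶ toOPAS.A),
    IsCover e ∧ toOPAS.RepresentsAt t r

/-- An OPCA pair `(A', A)`: an OPAS `A` with a subobject `A'` that is closed under
the application of `A` and such that the object of realizers of every partial
combinatory arrow of `A` intersects `A'`. -/
structure OPCAPair (E : Type u) [Category.{v} E] [HasFiniteLimits E] where
  S : OPAS E
  A' : Subobject S.A
  closed : ∀ {Γ : E} (x y z : Γ ⟶ S.A),
    A'.Factors x → A'.Factors y → S.App x y z → A'.Factors z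
  complete : ∀ {n : ℕ} (t : PTerm n), ∃ (Γ : E) (e : Γ ⟶ ⊤_ E) (r : Γ ⟶ S.A),
    IsCover e ∧ A'.Factors r ∧ S.RepresentsAt t r

/-- The underlying object of realizers of an OPCA pair. -/
abbrev OPCAPair.A (P : OPCAPair E) : E := P.S.A

/-- An `F`-filter for a regular functor `F` out of `E`: a subobject of `F A` that
is upward closed, closed under application, and meets `F U` whenever `U ⊆ A`
intersects `A'`. -/
structure RFilter {C : Type u₁} [Category.{v₁} C] (P : OPCAPair E) (F : E ⥤ C) where
  carrier : Subobject (F.obj P.A)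
  upward : ∀ {Γ : C} (p : Γ ⟶ F.obj (P.A ⨯ P.A)),
    (mapSub F P.S.le).Factors p → carrier.Factors (p ≫ F.map prod.fst) →
    carrier.Factors (p ≫ F.map prod.snd)
  app_closed : ∀ {Γ : C} (p : Γ ⟶ F.obj ((P.S.dom : E))),
    carrier.Factors (p ≫ F.map (P.S.dom.arrow ≫ prod.fst)) →
    carrier.Factors (p ≫ F.map (P.S.dom.arrow ≫ prod.snd)) →
    carrier.Factors (p ≫ F.map P.S.app)
  meets : ∀ U : Subobject P.A, Intersects U P.A' →
    ∃ (Γ : C) (e : Γ ⟶ F.obj (⊤_ E)) (a : Γ ⟶ F.obj P.A),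
      IsCover e ∧ (mapSub F U).Factors a ∧ carrier.Factors a

/-- A morphism of regular models `(F, Cf) → (G, Df)`: the isomorphism `η`
restricts to an isomorphism between the image of the filter `Cf` and `Df`. -/
def FilterIso {C : Type u₁} [Category.{v₁} C] {D : Type u₂} [Category.{v₂} D]
    (P : OPCAPair E) (F : E ⥤ C) (G : E ⥤ D) (Cf : RFilter P F) (Df : RFilter P G)
    (H : C ⥤ D) (η : F ⋙ H ≅ G) : Prop :=
  Subobject.mk ((mapSub H Cf.carrier).arrow ≫ η.hom.app P.A) = Df.carrier

end RRC

namespace RRC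

open CategoryTheory CategoryTheory.Limits

section Exact

variable {C : Type u₁} [Category.{v₁} C]

/-- An internal equivalence relation, given by a jointly monic reflexive,
symmetric and transitive pair. -/
structure IsEquivRelation {R X : C} (r₁ r₂ : R ⟶ X) : Prop where
  jointlyMono : ∀ {Γ : C} (h k : Γ ⟶ R), h ≫ r₁ = k ≫ r₁ → h ≫ r₂ = k ≫ r₂ → h = k
  refl : ∀ {Γ : C} (x : Γ ⟶ X), ∃ d : Γ ⟶ R, d ≫ r₁ = x ∧ d ≫ r₂ = x
  symm : ∀ {Γ : C} (h : Γ ⟶ R), ∃ h' : Γ ⟶ R, h' ≫ r₁ = h ≫ r₂ ∧ h' ≫ r₂ = h ≫ r₁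
  trans : ∀ {Γ : C} (h k : Γ ⟶ R), h ≫ r₂ = k ≫ r₁ →
    ∃ l : Γ ⟶ R, l ≫ r₁ = h ≫ r₁ ∧ l ≫ r₂ = k ≫ r₂

/-- An exact category: a regular category in which every internal equivalence
relation is a kernel pair. -/
class ExactCat (C : Type u₁) [Category.{v₁} C] : Prop where
  toRegularCat : RegularCat C
  effective : ∀ {R X : C} (r₁ r₂ : R ⟶ X), IsEquivRelation r₁ r₂ →
    ∃ (Y : C) (q : X ⟶ Y), IsKernelPair q r₁ r₂

attribute [instance] ExactCat.toRegularCat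

/-- An exact completion of `C`: an exact category with a regular functor from `C`
through which every regular functor from `C` to an exact category factors,
uniquely up to isomorphism. -/
def IsExactCompletion {D : Type u₂} [Category.{v₂} D] (I : C ⥤ D) : Prop :=
  ExactCat D ∧ IsRegularFunctor I ∧
  ∀ (N : Type u₃) [Category.{v₃} N], ExactCat N → ∀ (G : C ⥤ N), IsRegularFunctor G →
    (∃ H : D ⥤ N, IsRegularFunctor H ∧ Nonempty (I ⋙ H ≅ G)) ∧
    (∀ H₁ H₂ : D ⥤ N, IsRegularFunctor H₁ → IsRegularFunctor H₂ →
      Nonempty (I ⋙ H₁ ≅ G) → Nonempty (I ⋙ H₂ ≅ G) → Nonempty (H₁ ≅ H₂))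

/-- A subobject classifier. -/
structure Classifier (C : Type u₁) [Category.{v₁} C] [HasTerminal C] where
  Ω : C
  truth : ⊤_ C ⟶ Ω
  χ : ∀ {U X : C} (m : U ⟶ X), Mono m → (X ⟶ Ω)
  isPullback : ∀ {U X : C} (m : U ⟶ X) (hm : Mono m),
    IsPullback (terminal.from U) m truth (χ m hm)
  uniq : ∀ {U X : C} (m : U ⟶ X) (hm : Mono m) (c : X ⟶ Ω),
    IsPullback (terminal.from U) m truth c → c = χ m hm

/-- Cartesian closure: every product functor `Y × -` has a right adjoint. -/
def CartClosed (C : Type u₁) [Category.{v₁} C] [HasBinaryProducts C] : Prop :=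
  ∀ Y : C, (Limits.prod.functor.obj Y).IsLeftAdjoint

/-- An (elementary) topos: a Heyting category which is cartesian closed and has a
subobject classifier. -/
class ToposCat (C : Type u₁) [Category.{v₁} C] [HeytingCat C] : Prop where
  cartesianClosed : CartClosed C
  classifier : Nonempty (Classifier C)

end Exact

variable {E : Type u} [Category.{v} E] [HasFiniteLimits E]

/-- Pseudoinitiality among exact models. -/
def ExactPseudoinitial {M : Type u₁} [Category.{v₁} M] (P : OPCAPair E)
    (F : E ⥤ M) (Cf : RFilter P F) : Prop :=
  ∀ (N : Type u₂) [Category.{v₂} N], ExactCat N → ∀ (G : E ⥤ N), IsRegularFunctor G →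
    ∀ Df : RFilter P G,
      (∃ (H : M ⥤ N) (η : F ⋙ H ≅ G), IsRegularFunctor H ∧ FilterIso P F G Cf Df H η) ∧
      (∀ (H₁ H₂ : M ⥤ N) (η₁ : F ⋙ H₁ ≅ G) (η₂ : F ⋙ H₂ ≅ G),
        IsRegularFunctor H₁ → FilterIso P F G Cf Df H₁ η₁ →
        IsRegularFunctor H₂ → FilterIso P F G Cf Df H₂ η₂ → Nonempty (H₁ ≅ H₂))

end RRC

/-!
Fix `Y`. As `L` preserves products, `X ↦ L (Y × X)` has the right adjoint `ι ∘ (L Y ⇒ -)`, so maps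
`Y × X ⟶ ι (L Z)` correspond to maps `X ⟶ ι (L Z ^ L Y)`. Since `η_Z : Z ⟶ ι (L Z)` is monic, maps
`Y × X ⟶ Z` are those maps into `ι (L Z)` that factor through `η_Z`. The condition "`(1 × g) ≫ ev`
factors through `η_Z`" on `g : X ⟶ ι (L Z ^ L Y)` is cut out by the subobject
`∀_{π₂} ev⁻¹(η_Z)`, which therefore represents `Y × - ⟶ Z`: it is the exponential `Z ^ Y`.
-/

namespace CategoryTheory.IsPullback

variable {C : Type u₁} [Category.{v₁} C]

lemma of_prod_snd_with_id {A B : C} (f : A ⟶ B) (X : C) [HasBinaryProduct X A]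
    [HasBinaryProduct X B] :
    IsPullback prod.snd (prod.map (𝟙 X) f) f prod.snd :=
  .of_isLimit' ⟨(prod.map_snd _ _).symm⟩ <| PullbackCone.IsLimit.mk _
    (fun s ↦ prod.lift (s.snd ≫ prod.fst) s.fst) (fun s ↦ prod.lift_snd _ _)
    (fun s ↦ prod.hom_ext (by simpa using prod.lift_fst _ _)
      (by simpa [s.condition] using prod.lift_snd _ _))
    (fun s m h₁ h₂ ↦ prod.hom_ext
      (by rw [← h₂, Category.assoc, prod.map_fst, Category.comp_id]; exact (prod.lift_fst _ _).symm)
      (h₁.trans (prod.lift_snd _ _).symm))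

end CategoryTheory.IsPullback

namespace CategoryTheory.Functor.RepresentableBy

variable {C : Type u₁} [Category.{v₁} C] {C' : Type u₂} [Category.{v₂} C']

noncomputable def ofMono {F : C ⥤ C'} {Z U : C'} (m : Z ⟶ U) [Mono m] {W : C}
    (e : (F.op ⋙ yoneda.obj U).RepresentableBy W) (R : Subobject W)
    (hR : ∀ {X : C} (g : X ⟶ W), R.Factors g ↔ (Subobject.mk m).Factors (e.homEquiv g)) :
    (F.op ⋙ yoneda.obj Z).RepresentableBy (R : C) where
  homEquiv {X} :=
    { toFun := fun k => (Subobject.mk m).factorThru _ ((hR _).1 (R.factors_comp_arrow k)) ≫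
        (Subobject.underlyingIso m).hom
      invFun := fun h => R.factorThru (e.homEquiv.symm (h ≫ m)) ((hR _).2 (by
        rw [Equiv.apply_symm_apply]; exact Subobject.factors_of_factors_right h
          (Subobject.mk_factors_self m)))
      left_inv := fun k => by
        apply Subobject.eq_of_comp_arrow_eq
        rw [Subobject.factorThru_arrow, Category.assoc, Subobject.underlyingIso_hom_comp_eq_mk,
          Subobject.factorThru_arrow, Equiv.symm_apply_apply]
      right_inv := fun h => by
        rw [← cancel_mono m, Category.assoc, Subobject.underlyingIso_hom_comp_eq_mk,
          Subobject.factorThru_arrow, Subobject.factorThru_arrow, Equiv.apply_symm_apply] }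
  homEquiv_comp f k := by
    rw [← cancel_mono m]
    change _ = (F.map f ≫ _) ≫ m
    simp only [Equiv.coe_fn_mk, Category.assoc, Subobject.underlyingIso_hom_comp_eq_mk,
      Subobject.factorThru_arrow]
    rw [e.homEquiv_comp]
    rfl

noncomputable def ofAdjunctionComp {D : Type u₃} [Category.{v₃} D] {F : C ⥤ C'} {L : C' ⥤ D}
    {ι : D ⥤ C'} {K : D ⥤ C} (adj : L ⊣ ι) (adjM : F ⋙ L ⊣ K) (Z : D) :
    (F.op ⋙ yoneda.obj (ι.obj Z)).RepresentableBy (K.obj Z) where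
  homEquiv {X} := (adjM.homEquiv X Z).symm.trans (adj.homEquiv (F.obj X) Z)
  homEquiv_comp f g := by
    simp only [Equiv.trans_apply, Adjunction.homEquiv_naturality_left_symm, Functor.comp_map]
    rw [adj.homEquiv_naturality_left]
    rfl

end CategoryTheory.Functor.RepresentableBy

namespace RRC

open CategoryTheory CategoryTheory.Limits

section Regular

variable {E : Type u} [Category.{v} E] [RegularCat E]

lemma isCover_prodMap_id {X B : E} (f : X ⟶ B) (hf : IsCover f) (Y : E) :
    IsCover (prod.map (𝟙 Y) f) :=
  RegularCat.coverStable _ _ _ _ (IsPullback.of_prod_snd_with_id f Y).flip hf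

/-- `Y × -` preserves covers, hence commutes with images. -/
lemma factors_imageSubobject_prodMap {Y X W : E} (g : X ⟶ W) :
    (imageSubobject (prod.map (𝟙 Y) g)).Factors (prod.map (𝟙 Y) (image.ι g)) := by
  obtain ⟨hcover⟩ := isCover_prodMap_id (factorThruImage g) (RegularCat.coverFactorThruImage g) Y
  have := hcover.effectiveEpi
  have sq : CommSq (factorThruImage (prod.map (𝟙 Y) g)) (prod.map (𝟙 Y) (factorThruImage g))
      (image.ι (prod.map (𝟙 Y) g)) (prod.map (𝟙 Y) (image.ι g)) :=
    ⟨by rw [image.fac, prod.map_map, Category.comp_id, image.fac]⟩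
  have := Subobject.factors_comp_arrow (sq.lift ≫ (imageSubobjectIso _).inv)
  rwa [Category.assoc, imageSubobject_arrow', sq.fac_right] at this

/-- Beck–Chevalley for `∀` along a product projection, in terms of generalized elements. -/
lemma SubAdjoints.factors_all_iff {Y W X : E} (A : SubAdjoints (prod.snd : Y ⨯ W ⟶ W))
    (T : Subobject (Y ⨯ W)) (g : X ⟶ W) :
    (A.all T).Factors g ↔ T.Factors (prod.map (𝟙 Y) g) := by
  constructor
  · intro hg
    refine Subobject.factors_of_le _ ((A.gc_all _ _).2 le_rfl) ((A.pb_spec _ _).2 ?_)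
    rw [prod.map_snd]
    exact Subobject.factors_of_factors_right _ hg
  · intro hT
    suffices A.pb (imageSubobject g) ≤ T from Subobject.factors_of_le g ((A.gc_all _ _).1 this)
      (by simpa using imageSubobject_factors_comp_self g (𝟙 _))
    refine Subobject.le_of_factors (Subobject.factors_of_le _ (imageSubobject_le _ _
      (T.factorThru_arrow _ hT)) ?_)
    set u := (A.pb (imageSubobject g)).arrow
    have hu : (imageSubobject g).Factors (u ≫ prod.snd) :=
      (A.pb_spec _ u).1 (Subobject.factors_self _)
    let k := (imageSubobject g).factorThru _ hu ≫ (imageSubobjectIso g).hom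
    have hk : k ≫ image.ι g = u ≫ prod.snd := by
      rw [Category.assoc, imageSubobject_arrow, Subobject.factorThru_arrow]
    have hu_eq : prod.lift (u ≫ prod.fst) k ≫ prod.map (𝟙 Y) (image.ι g) = u := by
      rw [prod.lift_map, Category.comp_id, hk, ← prod.comp_lift, prod.lift_fst_snd,
        Category.comp_id]
    rw [← hu_eq]
    exact Subobject.factors_of_factors_right _ (factors_imageSubobject_prodMap g)

end Regular

/-- The witness is `∀_{π₂} ev⁻¹(S)`, where `ev : Y × W ⟶ U` corresponds to `𝟙 W`. -/
lemma exists_subobject_factors_iff_homEquiv {E : Type u} [Category.{v} E] [HeytingCat E]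
    {Y U W : E} (e : ((prod.functor.obj Y).op ⋙ yoneda.obj U).RepresentableBy W)
    (S : Subobject U) :
    ∃ R : Subobject W, ∀ {X : E} (g : X ⟶ W), R.Factors g ↔ S.Factors (e.homEquiv g) := by
  let ev : Y ⨯ W ⟶ U := e.homEquiv (𝟙 W)
  obtain ⟨B⟩ := HeytingCat.adjoints ev
  obtain ⟨A⟩ := HeytingCat.adjoints (prod.snd : Y ⨯ W ⟶ W)
  refine ⟨A.all (B.pb S), fun g => ?_⟩
  have hev : e.homEquiv g = prod.map (𝟙 Y) g ≫ ev :=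
    (congrArg e.homEquiv (Category.comp_id g).symm).trans (e.homEquiv_comp g (𝟙 W))
  rw [A.factors_all_iff, B.pb_spec, hev]
  exact Iff.rfl

theorem statement11_general {E : Type u} [Category.{v} E] [HeytingCat E]
    {D : Type u₁} [Category.{v₁} D] [HasBinaryProducts D] (hD : CartClosed D)
    (ι : D ⥤ E)
    (L : E ⥤ D) (adj : L ⊣ ι) (hL : PreservesFiniteLimits L)
    (hmono : ∀ X : E, Mono (adj.unit.app X)) :
    CartClosed E := by
  intro Y
  have := hD (L.obj Y)
  let adjY : prod.functor.obj Y ⋙ L ⊣ (prod.functor.obj (L.obj Y)).rightAdjoint ⋙ ι :=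
    (adj.comp (Adjunction.ofIsLeftAdjoint _)).ofNatIsoLeft (prodComparisonNatIso L Y).symm
  refine Functor.isLeftAdjoint_of_rightAdjointObjIsDefined_eq_top (funext fun Z => eq_true ?_)
  let e := Functor.RepresentableBy.ofAdjunctionComp adj adjY (L.obj Z)
  obtain ⟨R, hR⟩ := exists_subobject_factors_iff_homEquiv e (Subobject.mk (adj.unit.app Z))
  exact (e.ofMono (adj.unit.app Z) R hR).isRepresentable

/-- Statement 11: let `E` be a Heyting category, `D` a cartesian closed full
subcategory (given by a fully faithful inclusion `ι`), and `L : E → D` a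
finite-limit-preserving left adjoint to the inclusion whose unit is a natural
monomorphism. Then `E` is cartesian closed. -/
theorem statement11 {E : Type u} [Category.{v} E] [HeytingCat E]
    {D : Type u₁} [Category.{v₁} D] [HasBinaryProducts D] (hD : CartClosed D)
    (ι : D ⥤ E) (hfull : ι.Full) (hfaithful : ι.Faithful)
    (L : E ⥤ D) (adj : L ⊣ ι) (hL : PreservesFiniteLimits L)
    (hmono : ∀ X : E, Mono (adj.unit.app X)) :
    CartClosed E :=
  statement11_general hD ι L adj hL hmono

end RRC
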